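/- arXiv:2211.04820 — 3 statements merged into one kernel-verified Lean document; each statement's English description precedes it below -/
import Mathlib

section
/- Let P be a polyomino that is not a square and let 𝔸 be a super partition of P. Then every maximal cell interval J ∈ 𝒞(P) with J ∉ 𝔸 is embedded. -/
/-- A cell of the grid, identified with its lower-left corner. -/
abbrev Cell : Type := ℤ × ℤ

/-- Two cells are adjacent if they differ by `(±1,0)` or `(0,±1)`. -/
def Adjacent (c d : Cell) : Prop :=
  (c.1 = d.1 ∧ (c.2 = d.2 + 1 ∨ d.2 = c.2 + 1)) ∨
  (c.2 = d.2 ∧ (c.1 = d.1 + 1 ∨ d.1 = c.1 + 1))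

/-- A polyomino: a finite nonempty set of cells, any two of which are joined by a
path of adjacent cells inside the set. -/
def IsPolyomino (P : Finset Cell) : Prop :=
  P.Nonempty ∧ ∀ c ∈ P, ∀ d ∈ P,
    Relation.ReflTransGen (fun a b => Adjacent a b ∧ a ∈ P ∧ b ∈ P) c d

/-- A horizontal segment of consecutive cells in a row. -/
def IsHSeg (S : Finset Cell) : Prop :=
  ∃ y a b : ℤ, a ≤ b ∧ S = (Finset.Icc a b).image (fun x => (x, y))

/-- A vertical segment of consecutive cells in a column. -/
def IsVSeg (S : Finset Cell) : Prop :=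
  ∃ x a b : ℤ, a ≤ b ∧ S = (Finset.Icc a b).image (fun y => (x, y))

/-- A maximal horizontal cell interval of `P`. -/
def IsMaxHInterval (P I : Finset Cell) : Prop :=
  IsHSeg I ∧ I ⊆ P ∧ ∀ I', IsHSeg I' → I' ⊆ P → I ⊆ I' → I' = I

/-- A maximal vertical cell interval of `P`. -/
def IsMaxVInterval (P I : Finset Cell) : Prop :=
  IsVSeg I ∧ I ⊆ P ∧ ∀ I', IsVSeg I' → I' ⊆ P → I ⊆ I' → I' = I

/-- A maximal cell interval of `P`. -/
def IsMaxInterval (P I : Finset Cell) : Prop :=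
  IsMaxHInterval P I ∨ IsMaxVInterval P I

/-- Two distinct cells of `P` attack each other if they lie in a common maximal
cell interval of `P`. -/
def Attacks (P : Finset Cell) (c d : Cell) : Prop :=
  c ≠ d ∧ ∃ I, IsMaxInterval P I ∧ c ∈ I ∧ d ∈ I

/-- A set of pairwise non-attacking cells of `P` (a face of the rook complex). -/
def IsRookSet (P F : Finset Cell) : Prop :=
  F ⊆ P ∧ ∀ c ∈ F, ∀ d ∈ F, ¬ Attacks P c d

/-- A maximal set of pairwise non-attacking cells of `P` (a facet of the rook complex). -/
def IsMaxRookSet (P F : Finset Cell) : Prop :=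
  IsRookSet P F ∧ ∀ G, IsRookSet P G → F ⊆ G → G = F

/-- An interval `I` is embedded if some set `F` of pairwise non-attacking cells,
disjoint from `I`, attacks every cell of `I`. -/
def IsEmbedded (P I : Finset Cell) : Prop :=
  ∃ F : Finset Cell, IsRookSet P F ∧ F ∩ I = ∅ ∧ ∀ c ∈ I, ∃ f ∈ F, Attacks P f c

/-- A partition of `P`: pairwise disjoint maximal cell intervals whose union is `P`. -/
def IsPartition (P : Finset Cell) (A : Finset (Finset Cell)) : Prop :=
  (∀ I ∈ A, IsMaxInterval P I) ∧
  (∀ I ∈ A, ∀ J ∈ A, I ≠ J → Disjoint I J) ∧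
  A.biUnion id = P

/-- A super partition: a partition none of whose intervals is embedded. -/
def IsSuperPartition (P : Finset Cell) (A : Finset (Finset Cell)) : Prop :=
  IsPartition P A ∧ ∀ I ∈ A, ¬ IsEmbedded P I

/-- `P` is a square: a translate of the `n × n` block of cells for some `n ≥ 1`. -/
def IsSquareBlock (P : Finset Cell) : Prop :=
  ∃ a b n : ℤ, 1 ≤ n ∧ P = Finset.Icc a (a + n - 1) ×ˢ Finset.Icc b (b + n - 1)

/-- The graph `G_P` on the cells of `P` whose edges are the attacking pairs. -/
def GP (P : Finset Cell) : SimpleGraph {c : Cell // c ∈ P} where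
  Adj c d := Attacks P (c : Cell) (d : Cell)
  symm := by
    constructor
    rintro c d ⟨hne, I, hI, hc, hd⟩
    exact ⟨hne.symm, I, hI, hd, hc⟩
  loopless := by
    constructor
    rintro c ⟨hne, -⟩
    exact hne rfl

/-- The complement graph `Ḡ_P`. -/
def GBar (P : Finset Cell) : SimpleGraph {c : Cell // c ∈ P} := (GP P)ᶜ

/-- `G` has an induced cycle of length `n`: an injective map from `ZMod n`
whose image induces exactly the cycle adjacencies. -/
def HasInducedCycle {V : Type*} (G : SimpleGraph V) (n : ℕ) : Prop :=
  3 ≤ n ∧ ∃ f : ZMod n → V, Function.Injective f ∧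
    ∀ i j : ZMod n, G.Adj (f i) (f j) ↔ (i = j + 1 ∨ j = i + 1)

/-- A graph is chordal if it has no induced cycle of length at least 4. -/
def IsChordal {V : Type*} (G : SimpleGraph V) : Prop :=
  ∀ n, 4 ≤ n → ¬ HasInducedCycle G n

/-- `P` is simple: any two cells outside `P` are joined by a path of adjacent
cells outside `P`. -/
def IsSimple (P : Finset Cell) : Prop :=
  ∀ c d : Cell, c ∉ P → d ∉ P →
    Relation.ReflTransGen (fun a b => Adjacent a b ∧ a ∉ P ∧ b ∉ P) c d

/-- `P` is thin: it contains no four cells forming a `2 × 2` square. -/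
def IsThin (P : Finset Cell) : Prop :=
  ¬ ∃ a : Cell, ({a, (a.1 + 1, a.2), (a.1, a.2 + 1), (a.1 + 1, a.2 + 1)} : Finset Cell) ⊆ P

/-- A path of distinct cells of `P`, consecutive cells being adjacent. -/
def IsCellPath (P : Finset Cell) (l : List Cell) : Prop :=
  l.Nodup ∧ (∀ c ∈ l, c ∈ P) ∧ l.Chain' Adjacent

/-- The number of changes of direction of a path of cells: positions `k`
(with `1 ≤ k ≤ length - 2`) where the `(k-1)`-st and `(k+1)`-st cells differ
in both coordinates. -/
def dirChanges (l : List Cell) : ℕ :=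
  ((Finset.Ico 1 (l.length - 1)).filter (fun k =>
    (l.getD (k - 1) (0, 0)).1 ≠ (l.getD (k + 1) (0, 0)).1 ∧
    (l.getD (k - 1) (0, 0)).2 ≠ (l.getD (k + 1) (0, 0)).2)).card

/-- The eight rotations/reflections of the grid. -/
def dihedralMaps : List (Cell → Cell) :=
  [fun p => (p.1, p.2), fun p => (-p.2, p.1), fun p => (-p.1, -p.2), fun p => (p.2, -p.1),
   fun p => (p.2, p.1), fun p => (-p.1, p.2), fun p => (-p.2, -p.1), fun p => (p.1, -p.2)]

/-- `P` is obtained from `Q` by a translation, rotation or reflection of `ℤ²`. -/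
def CongruentTo (P Q : Finset Cell) : Prop :=
  ∃ g ∈ dihedralMaps, ∃ t : Cell, P = Q.image (fun p => g p + t)

/-- A brush polyomino with handle `J`. -/
def IsBrush (P J : Finset Cell) : Prop :=
  IsPolyomino P ∧ IsSimple P ∧ IsThin P ∧ IsMaxInterval P J ∧
  (∀ I, IsMaxInterval P I → 2 ≤ I.card → I ≠ J → (I ∩ J).Nonempty) ∧
  (∀ c ∈ P, c ∈ J ∨ ∃ I, IsMaxInterval P I ∧ 2 ≤ I.card ∧ c ∈ I)

/-- A short brush polyomino: a brush all of whose bristles have at most two cells. -/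
def IsShortBrush (P : Finset Cell) : Prop :=
  ∃ J, IsBrush P J ∧ ∀ I, IsMaxInterval P I → I ≠ J → I.card ≤ 2

/-- A pure brush polyomino: handle `J` of cardinality `d` together with `d`
pairwise disjoint bristles `I 0, …, I (d-1)` perpendicular to `J`, each meeting
`J`, whose union is `P`. -/
def IsPureBrush (P J : Finset Cell) (d : ℕ) (I : Fin d → Finset Cell) : Prop :=
  IsPolyomino P ∧ IsSimple P ∧ IsThin P ∧
  J.card = d ∧
  ((IsMaxHInterval P J ∧ ∀ k, IsMaxVInterval P (I k)) ∨
   (IsMaxVInterval P J ∧ ∀ k, IsMaxHInterval P (I k))) ∧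
  (∀ j k, j ≠ k → Disjoint (I j) (I k)) ∧
  (∀ k, ((I k) ∩ J).Nonempty) ∧
  Finset.univ.biUnion I = P

/-- The `k`-th elementary symmetric polynomial of `x 0, …, x (d-1)`. -/
def esymm {R : Type*} [CommRing R] {d : ℕ} (k : ℕ) (x : Fin d → R) : R :=
  ∑ s ∈ Finset.powersetCard k (Finset.univ : Finset (Fin d)), ∏ i ∈ s, x i

/-- `G_P` has an induced matching with `n` edges `{A i, B i}`. -/
def HasInducedMatching (P : Finset Cell) (n : ℕ) : Prop :=
  ∃ A B : Fin n → Cell,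
    (∀ i, Attacks P (A i) (B i)) ∧
    (∀ i j, i ≠ j → A i ≠ A j) ∧
    (∀ i j, i ≠ j → B i ≠ B j) ∧
    (∀ i j, A i ≠ B j) ∧
    (∀ i j, i ≠ j →
      ¬ Attacks P (A i) (A j) ∧ ¬ Attacks P (A i) (B j) ∧ ¬ Attacks P (B i) (B j))

/-- The induced matching number `ν(G_P)`. -/
noncomputable def matchNum (P : Finset Cell) : ℕ := sSup {n | HasInducedMatching P n}

/-- `c` is a single cell of the maximal interval `I`: the maximal interval of `P`
through `c` perpendicular to `I` is `{c}`. -/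
def IsSingleCell (P I : Finset Cell) (c : Cell) : Prop :=
  c ∈ I ∧
  ((IsMaxHInterval P I ∧ ∀ I', IsMaxVInterval P I' → c ∈ I' → I' = {c}) ∨
   (IsMaxVInterval P I ∧ ∀ I', IsMaxHInterval P I' → c ∈ I' → I' = {c}))

/-!
Think of the maximal intervals as the vertices of a bipartite graph whose edges are the cells.
Say `J` is a row.  As `J ∉ 𝔸`, every column through `J` lies in `𝔸`, so none of them is
embedded.  By Hall's theorem an interval `I` is embedded as soon as its cells `e` can be assigned
distinct lines parallel to `I`, other than `I`, that cross the perpendicular line at `e`: a rook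
at each crossing does the job.  If `J` is not embedded, take a minimal Hall violator `D ⊆ J`.
For `d ∈ D`, a Hall violator of the column through `d` must contain `d`, and the matchings of
`D` minus a cell then force `D = J`, every column through `J` to meet exactly the same `|J|`
rows, and these rows to meet only columns through `J`.  By connectivity these rows and columns
exhaust `P`, and every row meets every column, so `P` is a `|J| × |J|` square.
-/

open Finset

namespace Finset

variable {α β : Type*} [DecidableEq α] [DecidableEq β] {t : α → Finset β} {I : Finset α}

theorem exists_injective_of_forall_subset_card_le
    (h : ∀ s ⊆ I, #s ≤ #(s.biUnion t)) :
    ∃ f : I → β, Function.Injective f ∧ ∀ x : I, f x ∈ t x := by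
  refine (all_card_le_biUnion_card_iff_exists_injective _).1 fun s => ?_
  have hs : s.image Subtype.val ⊆ I := by
    intro x hx
    obtain ⟨y, -, rfl⟩ := mem_image.1 hx
    exact y.2
  simpa [card_image_of_injective _ Subtype.val_injective, image_biUnion] using h _ hs

theorem exists_hall_critical (h : ∃ s ⊆ I, #(s.biUnion t) < #s) :
    ∃ D ⊆ I, #(D.biUnion t) < #D ∧ ∀ d ∈ D, ∃ τ : β → α,
      Set.InjOn τ (D.biUnion t) ∧ ∀ r ∈ D.biUnion t, τ r ∈ D.erase d ∧ r ∈ t (τ r) := by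
  obtain ⟨s, hsI, hs⟩ := h
  obtain ⟨D, hD, hmin⟩ := exists_min_image (I.powerset.filter fun s => #(s.biUnion t) < #s)
    card ⟨s, mem_filter.2 ⟨mem_powerset.2 hsI, hs⟩⟩
  obtain ⟨hDI, hDt⟩ := mem_filter.1 hD
  refine ⟨D, mem_powerset.1 hDI, hDt, fun d hd => ?_⟩
  have hcard : #(D.erase d) + 1 = #D := card_erase_add_one hd
  have hall : ∀ s ⊆ D.erase d, #s ≤ #(s.biUnion t) := by
    intro s hs
    by_contra hlt
    have := hmin s (mem_filter.2 ⟨mem_powerset.2 (hs.trans ((erase_subset _ _).trans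
      (mem_powerset.1 hDI))), not_le.1 hlt⟩)
    have := card_le_card hs
    omega
  obtain ⟨σ, hσ, hσt⟩ := exists_injective_of_forall_subset_card_le hall
  have hsurj : ∀ r ∈ D.biUnion t, ∃ x, σ x = r := by
    have himage : univ.image σ = D.biUnion t := by
      refine eq_of_subset_of_card_le (fun r hr => ?_) ?_
      · obtain ⟨x, -, rfl⟩ := mem_image.1 hr
        exact mem_biUnion.2 ⟨x, mem_of_mem_erase x.2, hσt x⟩
      · rw [card_image_of_injective _ hσ, card_univ, Fintype.card_coe]
        omega
    intro r hr
    simpa [← himage] using hr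
  refine ⟨fun r => if h : ∃ x, σ x = r then (h.choose : α) else d, ?_, fun r hr => ?_⟩
  · intro r hr r' hr' heq
    have hx := hsurj r hr
    have hx' := hsurj r' hr'
    simp only [dif_pos hx, dif_pos hx'] at heq
    rw [← hx.choose_spec, ← hx'.choose_spec, Subtype.ext heq]
  · have hx := hsurj r hr
    simp only [dif_pos hx]
    have hmem := hσt hx.choose
    rw [hx.choose_spec] at hmem
    exact ⟨hx.choose.2, hmem⟩

theorem mem_and_image_erase_eq_of_card_lt {s : Finset α} {X : Finset β} {a : α} {φ : α → β}
    (hφ : Set.InjOn φ (s.erase a)) (hmaps : ∀ x ∈ s.erase a, φ x ∈ X) (hX : #X < #s) :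
    a ∈ s ∧ (s.erase a).image φ = X := by
  have himage : (s.erase a).image φ ⊆ X := fun r hr => by
    obtain ⟨x, hx, rfl⟩ := mem_image.1 hr
    exact hmaps x hx
  have hcard := card_image_of_injOn hφ
  by_cases ha : a ∈ s
  · refine ⟨ha, eq_of_subset_of_card_le himage ?_⟩
    have := card_erase_add_one ha
    omega
  · rw [erase_eq_of_notMem ha] at himage hcard
    have := card_le_card himage
    omega

end Finset

@[simp]
lemma mem_hseg_iff {y a b : ℤ} {c : Cell} :
    c ∈ (Icc a b).image (fun x => (x, y)) ↔ (a ≤ c.1 ∧ c.1 ≤ b) ∧ c.2 = y := by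
  obtain ⟨u, v⟩ := c
  simp [eq_comm]

@[simp]
lemma mem_vseg_iff {x a b : ℤ} {c : Cell} :
    c ∈ (Icc a b).image (fun y => (x, y)) ↔ (a ≤ c.2 ∧ c.2 ≤ b) ∧ c.1 = x := by
  obtain ⟨u, v⟩ := c
  simp [eq_comm]

lemma IsHSeg.snd_eq {S : Finset Cell} (hS : IsHSeg S) {c d : Cell} (hc : c ∈ S) (hd : d ∈ S) :
    c.2 = d.2 := by
  obtain ⟨y, a, b, -, rfl⟩ := hS
  simp only [mem_hseg_iff] at hc hd
  rw [hc.2, hd.2]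

lemma IsVSeg.fst_eq {S : Finset Cell} (hS : IsVSeg S) {c d : Cell} (hc : c ∈ S) (hd : d ∈ S) :
    c.1 = d.1 := by
  obtain ⟨x, a, b, -, rfl⟩ := hS
  simp only [mem_vseg_iff] at hc hd
  rw [hc.2, hd.2]

def IsSeg : Bool → Finset Cell → Prop
  | true => IsHSeg
  | false => IsVSeg

def IsMaxSeg (P : Finset Cell) (o : Bool) (I : Finset Cell) : Prop :=
  IsSeg o I ∧ I ⊆ P ∧ ∀ I', IsSeg o I' → I' ⊆ P → I ⊆ I' → I' = I

lemma isMaxInterval_iff {P I : Finset Cell} : IsMaxInterval P I ↔ ∃ o, IsMaxSeg P o I := by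
  constructor
  · rintro (h | h)
    exacts [⟨true, h⟩, ⟨false, h⟩]
  · rintro ⟨_ | _, h⟩
    exacts [Or.inr h, Or.inl h]

namespace IsSeg

lemma singleton (o : Bool) (c : Cell) : IsSeg o {c} := by
  cases o
  · exact ⟨c.1, c.2, c.2, le_rfl, by ext ⟨u, v⟩; simp⟩
  · exact ⟨c.2, c.1, c.1, le_rfl, by ext ⟨u, v⟩; simp⟩

lemma union {o : Bool} {S T : Finset Cell} (hS : IsSeg o S) (hT : IsSeg o T) {c : Cell}
    (hcS : c ∈ S) (hcT : c ∈ T) : IsSeg o (S ∪ T) := by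
  cases o
  · obtain ⟨x, a, b, -, rfl⟩ := hS
    obtain ⟨x', a', b', -, rfl⟩ := hT
    simp only [mem_vseg_iff] at hcS hcT
    exact ⟨x, min a a', max b b', by omega, by ext; simp only [mem_union, mem_vseg_iff]; omega⟩
  · obtain ⟨y, a, b, -, rfl⟩ := hS
    obtain ⟨y', a', b', -, rfl⟩ := hT
    simp only [mem_hseg_iff] at hcS hcT
    exact ⟨y, min a a', max b b', by omega, by ext; simp only [mem_union, mem_hseg_iff]; omega⟩

lemma nonempty {o : Bool} {S : Finset Cell} (hS : IsSeg o S) : S.Nonempty := by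
  cases o
  · obtain ⟨x, a, b, hab, rfl⟩ := hS
    exact ⟨(x, a), by simpa using hab⟩
  · obtain ⟨y, a, b, hab, rfl⟩ := hS
    exact ⟨(a, y), by simpa using hab⟩

lemma eq_of_mem {o o' : Bool} (ho : o ≠ o') {S T : Finset Cell} (hS : IsSeg o S)
    (hT : IsSeg o' T) {c d : Cell} (hcS : c ∈ S) (hdS : d ∈ S) (hcT : c ∈ T) (hdT : d ∈ T) :
    c = d := by
  cases o <;> cases o' <;> simp only [ne_eq, not_true_eq_false] at ho
  · exact Prod.ext (IsVSeg.fst_eq hS hcS hdS) (IsHSeg.snd_eq hT hcT hdT)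
  · exact Prod.ext (IsVSeg.fst_eq hT hcT hdT) (IsHSeg.snd_eq hS hcS hdS)

lemma exists_of_adjacent {c d : Cell} (h : Adjacent c d) : ∃ o, IsSeg o {c, d} := by
  obtain ⟨u, v⟩ := c
  obtain ⟨u', v'⟩ := d
  rcases h with ⟨h1, h2⟩ | ⟨h1, h2⟩
  · refine ⟨false, u, min v v', max v v', by omega, ?_⟩
    ext ⟨p, q⟩
    simp only [mem_insert, mem_singleton, Prod.mk.injEq, mem_vseg_iff] at h1 h2 ⊢
    omega
  · refine ⟨true, v, min u u', max u u', by omega, ?_⟩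
    ext ⟨p, q⟩
    simp only [mem_insert, mem_singleton, Prod.mk.injEq, mem_hseg_iff] at h1 h2 ⊢
    omega

end IsSeg

section Lines

variable {P I S : Finset Cell} {o o' : Bool} {c d x : Cell}

lemma IsMaxSeg.subset_of_isSeg (hI : IsMaxSeg P o I) (hS : IsSeg o S) (hSP : S ⊆ P)
    (hcI : c ∈ I) (hcS : c ∈ S) : S ⊆ I := by
  rw [← hI.2.2 (I ∪ S) (hI.1.union hS hcI hcS) (union_subset hI.2.1 hSP) subset_union_left]
  exact subset_union_right

lemma exists_isMaxSeg (o : Bool) (hc : c ∈ P) : ∃ I, IsMaxSeg P o I ∧ c ∈ I := by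
  classical
  set segs := P.powerset.filter fun I => IsSeg o I ∧ c ∈ I
  have hc' : {c} ∈ segs := by simpa [segs] using ⟨hc, IsSeg.singleton o c⟩
  obtain ⟨I, hI, hmax⟩ := segs.exists_max_image card ⟨{c}, hc'⟩
  simp only [segs, mem_filter, mem_powerset] at hI hmax
  refine ⟨I, ⟨hI.2.1, hI.1, fun I' hI' hI'P hII' => ?_⟩, hI.2.2⟩
  exact (eq_of_subset_of_card_le hII' (hmax I' ⟨hI'P, hI', hII' hI.2.2⟩)).symm

/-- The maximal `o`-segment of `P` through `c`; junk unless `c ∈ P`. -/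
noncomputable def line (P : Finset Cell) (o : Bool) (c : Cell) : Finset Cell :=
  Classical.epsilon fun I => IsMaxSeg P o I ∧ c ∈ I

lemma isMaxSeg_line (hc : c ∈ P) : IsMaxSeg P o (line P o c) :=
  (Classical.epsilon_spec (exists_isMaxSeg o hc)).1

lemma mem_line (hc : c ∈ P) : c ∈ line P o c :=
  (Classical.epsilon_spec (exists_isMaxSeg o hc)).2

lemma line_subset (hc : c ∈ P) : line P o c ⊆ P :=
  (isMaxSeg_line hc).2.1

lemma snd_eq_of_mem_line_true (hc : c ∈ P) (hd : d ∈ line P true c) : d.2 = c.2 :=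
  IsHSeg.snd_eq (isMaxSeg_line (o := true) hc).1 hd (mem_line hc)

lemma fst_eq_of_mem_line_false (hc : c ∈ P) (hd : d ∈ line P false c) : d.1 = c.1 :=
  IsVSeg.fst_eq (isMaxSeg_line (o := false) hc).1 hd (mem_line hc)

lemma IsMaxSeg.eq_line (hI : IsMaxSeg P o I) (hc : c ∈ I) : I = line P o c := by
  have hcP := hI.2.1 hc
  exact subset_antisymm ((isMaxSeg_line hcP).subset_of_isSeg hI.1 hI.2.1 (mem_line hcP) hc)
    (hI.subset_of_isSeg (isMaxSeg_line hcP).1 (line_subset hcP) hc (mem_line hcP))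

lemma line_eq_of_mem (hc : c ∈ P) (hd : d ∈ line P o c) : line P o d = line P o c :=
  ((isMaxSeg_line hc).eq_line hd).symm

lemma eq_of_mem_line_of_mem_line (ho : o ≠ o') (hc : c ∈ P) (hd : d ∈ line P o c)
    (hd' : d ∈ line P o' c) : d = c :=
  IsSeg.eq_of_mem ho (isMaxSeg_line hc).1 (isMaxSeg_line hc).1 hd (mem_line hc) hd' (mem_line hc)

lemma injOn_line (ho : o ≠ o') (hc : c ∈ P) : Set.InjOn (line P o') (line P o c) := by
  intro a ha b hb hab
  have haP := line_subset hc ha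
  refine (eq_of_mem_line_of_mem_line ho haP ?_ ?_).symm
  · rw [line_eq_of_mem hc ha]; exact hb
  · rw [hab]; exact mem_line (line_subset hc hb)

lemma IsMaxInterval.eq_line_or_eq_line (ho : o ≠ o') (hI : IsMaxInterval P I) (hc : c ∈ I) :
    I = line P o c ∨ I = line P o' c := by
  obtain ⟨o'', hI⟩ := isMaxInterval_iff.1 hI
  have : o'' = o ∨ o'' = o' := by revert ho; cases o <;> cases o' <;> cases o'' <;> simp
  rcases this with rfl | rfl
  exacts [Or.inl (hI.eq_line hc), Or.inr (hI.eq_line hc)]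

lemma isMaxInterval_line (hc : c ∈ P) : IsMaxInterval P (line P o c) :=
  isMaxInterval_iff.2 ⟨o, isMaxSeg_line hc⟩

lemma Attacks.mem_line (ho : o ≠ o') (h : Attacks P c d) :
    d ∈ line P o c ∨ d ∈ line P o' c := by
  obtain ⟨-, I, hI, hc, hd⟩ := h
  rcases hI.eq_line_or_eq_line ho hc with rfl | rfl
  exacts [Or.inl hd, Or.inr hd]

lemma attacks_of_mem_line (hx : x ∈ P) (hc : c ∈ line P o x) (hd : d ∈ line P o x)
    (hne : c ≠ d) : Attacks P c d :=
  ⟨hne, line P o x, isMaxInterval_line hx, hc, hd⟩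

lemma mem_line_of_adjacent (ho : o ≠ o') (hadj : Adjacent c d) (hc : c ∈ P) (hd : d ∈ P) :
    d ∈ line P o c ∨ d ∈ line P o' c := by
  obtain ⟨o'', hseg⟩ := IsSeg.exists_of_adjacent hadj
  have hsub := (isMaxSeg_line (o := o'') hc).subset_of_isSeg hseg
    (by simp [insert_subset_iff, hc, hd]) (mem_line hc) (by simp)
  have hd' : d ∈ line P o'' c := hsub (by simp)
  rcases (isMaxInterval_line hc).eq_line_or_eq_line ho (mem_line hc) with h | h
  exacts [Or.inl (h ▸ hd'), Or.inr (h ▸ hd')]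

end Lines

section Embedding

variable {P I : Finset Cell} {o o' : Bool}

/-- A rook attacking a cell `e` of the `o`-line `I` from outside `I` lies on the `o'`-line at
`e`, hence on one of these lines; Hall's theorem is applied to this family. -/
noncomputable def crossLines (P : Finset Cell) (o o' : Bool) (I : Finset Cell) (e : Cell) :
    Finset (Finset Cell) :=
  ((line P o' e).image (line P o)).erase I

lemma isEmbedded_of_injective (ho : o ≠ o') (hI : IsMaxSeg P o I) {f : I → Finset Cell}
    (hf : Function.Injective f) (hft : ∀ e : I, f e ∈ crossLines P o o' I e) :
    IsEmbedded P I := by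
  have hIP : ∀ e : I, (e : Cell) ∈ P := fun e => hI.2.1 e.2
  have hrook : ∀ e : I, ∃ g ∈ line P o' e, line P o g = f e := fun e =>
    mem_image.1 (mem_of_mem_erase (hft e))
  choose g hg hgf using hrook
  have hgP : ∀ e, g e ∈ P := fun e => line_subset (hIP e) (hg e)
  have hgI : ∀ e, g e ∉ I := fun e hgeI =>
    ne_of_mem_erase (hft e) (by rw [← hgf e, ← hI.eq_line hgeI])
  refine ⟨univ.image g, ⟨?_, ?_⟩, ?_, fun c hc => ?_⟩
  · intro x hx
    obtain ⟨e, -, rfl⟩ := mem_image.1 hx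
    exact hgP e
  · simp only [mem_image, mem_univ, true_and]
    rintro _ ⟨a, rfl⟩ _ ⟨b, rfl⟩ hab
    rcases hab.mem_line ho with h | h
    · refine hab.1 (congrArg g (hf ?_))
      rw [← hgf a, ← hgf b, line_eq_of_mem (hgP a) h]
    · have hline : line P o' a = line P o' b := by
        rw [← line_eq_of_mem (hIP a) (hg a), ← line_eq_of_mem (hgP a) h,
          line_eq_of_mem (hIP b) (hg b)]
      have hab' := injOn_line ho (hIP a) (mem_line (hIP a))
        (by rw [← hI.eq_line a.2]; exact b.2) hline
      exact hab.1 (by rw [Subtype.ext hab'])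
  · refine eq_empty_of_forall_notMem fun x hx => ?_
    obtain ⟨hxF, hxI⟩ := mem_inter.1 hx
    obtain ⟨e, -, rfl⟩ := mem_image.1 hxF
    exact hgI e hxI
  · refine ⟨g ⟨c, hc⟩, mem_image_of_mem _ (mem_univ _), attacks_of_mem_line (hI.2.1 hc) (hg _)
      (mem_line (hI.2.1 hc)) fun h => hgI _ (h ▸ hc)⟩

lemma exists_card_lt_of_not_isEmbedded (ho : o ≠ o') (hI : IsMaxSeg P o I)
    (h : ¬ IsEmbedded P I) : ∃ s ⊆ I, #(s.biUnion (crossLines P o o' I)) < #s := by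
  by_contra! hall
  obtain ⟨f, hf, hft⟩ := exists_injective_of_forall_subset_card_le hall
  exact h (isEmbedded_of_injective ho hI hf hft)

end Embedding

lemma IsPolyomino.forall_mem_of_adjacent {P : Finset Cell} (hP : IsPolyomino P)
    {p : Cell → Prop} {c : Cell} (hc : c ∈ P) (hpc : p c)
    (hstep : ∀ a ∈ P, ∀ b ∈ P, Adjacent a b → p a → p b) : ∀ d ∈ P, p d := by
  intro d hd
  induction hP.2 c hc d hd with
  | refl => exact hpc
  | tail _ hab ih => exact hstep _ hab.2.1 _ hab.2.2 hab.1 (ih hab.2.1)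

lemma isSquareBlock_of_forall_meet {P : Finset Cell} {c : Cell} (hc : c ∈ P)
    (hmeet : ∀ g ∈ P, ∀ h ∈ P, ∃ x, x ∈ line P true g ∧ x ∈ line P false h)
    (hcard : #(line P true c) = #(line P false c)) : IsSquareBlock P := by
  obtain ⟨y, a, b, hab, hH⟩ : IsHSeg (line P true c) := (isMaxSeg_line (o := true) hc).1
  obtain ⟨x, a', b', hab', hV⟩ : IsVSeg (line P false c) := (isMaxSeg_line (o := false) hc).1
  have hlen : b - a = b' - a' := by
    rw [hH, hV, card_image_of_injective _ fun _ _ h => by simpa using h,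
      card_image_of_injective _ fun _ _ h => by simpa using h, Int.card_Icc, Int.card_Icc] at hcard
    omega
  refine ⟨a, a', b - a + 1, by omega, ?_⟩
  ext ⟨u, v⟩
  simp only [mem_product, mem_Icc]
  constructor
  · intro huv
    obtain ⟨p, hpH, hpV⟩ := hmeet c hc _ huv
    obtain ⟨q, hqH, hqV⟩ := hmeet _ huv c hc
    have hp : p.1 = u := fst_eq_of_mem_line_false huv hpV
    have hq : q.2 = v := snd_eq_of_mem_line_true huv hqH
    rw [hH, mem_hseg_iff] at hpH
    rw [hV, mem_vseg_iff] at hqV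
    omega
  · rintro ⟨hu, hv⟩
    have h1 : (u, y) ∈ P := line_subset hc (by rw [hH, mem_hseg_iff]; omega)
    have h2 : (x, v) ∈ P := line_subset hc (by rw [hV, mem_vseg_iff]; omega)
    obtain ⟨p, hpH, hpV⟩ := hmeet _ h2 _ h1
    have hp1 := fst_eq_of_mem_line_false h1 hpV
    have hp2 := snd_eq_of_mem_line_true h2 hpH
    rw [show (u, v) = p from Prod.ext hp1.symm hp2.symm]
    exact line_subset h2 hpH

section Core

variable {P J D E : Finset Cell} {o o' : Bool} {d₀ f : Cell}

lemma line_mem_crossLines (ho : o ≠ o') (hJ : IsMaxSeg P o J) (hd₀ : d₀ ∈ J)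
    (hf : f ∈ line P o' d₀) (hfd₀ : f ≠ d₀) : line P o f ∈ crossLines P o o' J d₀ := by
  have hd₀P := hJ.2.1 hd₀
  refine mem_erase.2 ⟨fun hfJ => hfd₀ (eq_of_mem_line_of_mem_line ho hd₀P ?_ hf),
    mem_image_of_mem _ hf⟩
  rw [← hJ.eq_line hd₀, ← hfJ]
  exact mem_line (line_subset hd₀P hf)

lemma injOn_line_of_isMaxSeg (ho : o ≠ o') (hJ : IsMaxSeg P o J) : Set.InjOn (line P o') J := by
  intro a ha b hb hab
  exact injOn_line ho (hJ.2.1 ha) (mem_line (hJ.2.1 ha)) (hJ.eq_line ha ▸ hb) hab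

/-- `f ↦ line P o' (τ (line P o f))` maps `E.erase d₀` injectively into the neighbourhood of
`E`, which is smaller than `E`; hence `d₀ ∈ E` and the map is onto. -/
lemma mem_and_biUnion_subset_of_critical (ho : o ≠ o') (hJ : IsMaxSeg P o J) (hDJ : D ⊆ J)
    (hd₀ : d₀ ∈ D) {τ : Finset Cell → Cell}
    (hτinj : Set.InjOn τ (D.biUnion (crossLines P o o' J)))
    (hτ : ∀ r ∈ D.biUnion (crossLines P o o' J),
      τ r ∈ D.erase d₀ ∧ r ∈ crossLines P o o' J (τ r))
    (hE : E ⊆ line P o' d₀) (hEv : #(E.biUnion (crossLines P o' o (line P o' d₀))) < #E) :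
    d₀ ∈ E ∧ E.biUnion (crossLines P o' o (line P o' d₀)) ⊆ (D.erase d₀).image (line P o') := by
  have hd₀P : d₀ ∈ P := hJ.2.1 (hDJ hd₀)
  have hinjJ := injOn_line_of_isMaxSeg ho hJ
  have hN : ∀ f ∈ E.erase d₀, line P o f ∈ D.biUnion (crossLines P o o' J) := fun f hf =>
    mem_biUnion.2 ⟨d₀, hd₀, line_mem_crossLines ho hJ (hDJ hd₀) (hE (mem_of_mem_erase hf))
      (ne_of_mem_erase hf)⟩
  have hτD : ∀ f ∈ E.erase d₀, τ (line P o f) ∈ J := fun f hf =>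
    hDJ (mem_of_mem_erase (hτ _ (hN f hf)).1)
  have hmaps : ∀ f ∈ E.erase d₀, line P o' (τ (line P o f)) ∈
      E.biUnion (crossLines P o' o (line P o' d₀)) := by
    intro f hf
    obtain ⟨hx, hrx⟩ := hτ _ (hN f hf)
    obtain ⟨g, hg, hgf⟩ := mem_image.1 (mem_of_mem_erase hrx)
    have hxP := hJ.2.1 (hτD f hf)
    refine mem_biUnion.2 ⟨f, mem_of_mem_erase hf, mem_erase.2 ⟨fun h => ?_, ?_⟩⟩
    · exact ne_of_mem_erase hx (hinjJ (hτD f hf) (hDJ hd₀) h)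
    · rw [← line_eq_of_mem hxP hg]
      exact mem_image_of_mem _ (hgf ▸ mem_line (line_subset hxP hg))
  have hinj : Set.InjOn (fun f => line P o' (τ (line P o f))) (E.erase d₀) := by
    intro f hf f' hf' h
    have hτ' := hτinj (hN f hf) (hN f' hf') (hinjJ (hτD f hf) (hτD f' hf') h)
    exact injOn_line ho.symm hd₀P (hE (mem_of_mem_erase hf)) (hE (mem_of_mem_erase hf')) hτ'
  obtain ⟨hd₀E, himage⟩ := mem_and_image_erase_eq_of_card_lt hinj hmaps hEv
  refine ⟨hd₀E, himage ▸ fun r hr => ?_⟩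
  obtain ⟨f, hf, rfl⟩ := mem_image.1 hr
  exact mem_image_of_mem _ (hτ _ (hN f hf)).1

lemma subset_of_crossLines_subset (ho : o ≠ o') (hJ : IsMaxSeg P o J) (hDJ : D ⊆ J)
    (hd₀ : d₀ ∈ D)
    (hsub : crossLines P o' o (line P o' d₀) d₀ ⊆ (D.erase d₀).image (line P o')) :
    J ⊆ D := by
  have hinjJ := injOn_line_of_isMaxSeg ho hJ
  intro d hd
  by_cases hdd₀ : d = d₀
  · exact hdd₀ ▸ hd₀
  have hcross : line P o' d ∈ crossLines P o' o (line P o' d₀) d₀ :=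
    mem_erase.2 ⟨fun h => hdd₀ (hinjJ hd (hDJ hd₀) h),
      mem_image_of_mem _ (hJ.eq_line (hDJ hd₀) ▸ hd)⟩
  obtain ⟨d', hd', h⟩ := mem_image.1 (hsub hcross)
  exact hinjJ (hDJ (mem_of_mem_erase hd')) hd h ▸ mem_of_mem_erase hd'

lemma grid_of_critical (ho : o ≠ o') (hJ : IsMaxSeg P o J)
    (hN : #(J.biUnion (crossLines P o o' J)) < #J) (hd₀ : d₀ ∈ J)
    (hE : E ⊆ line P o' d₀) (hEv : #(E.biUnion (crossLines P o' o (line P o' d₀))) < #E)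
    (hd₀E : d₀ ∈ E)
    (hsub : E.biUnion (crossLines P o' o (line P o' d₀)) ⊆ (J.erase d₀).image (line P o')) :
    (line P o' d₀).image (line P o) = insert J (J.biUnion (crossLines P o o' J)) ∧
      #(line P o' d₀) = #J ∧
      ∀ f ∈ line P o' d₀, (line P o f).image (line P o') ⊆ J.image (line P o') := by
  have hd₀P : d₀ ∈ P := hJ.2.1 hd₀
  have hJd₀ : line P o d₀ = J := (hJ.eq_line hd₀).symm
  have hcross : #(crossLines P o' o (line P o' d₀) d₀) + 1 = #J := by
    rw [crossLines, hJd₀, card_erase_add_one (mem_image_of_mem _ hd₀),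
      card_image_of_injOn (injOn_line_of_isMaxSeg ho hJ)]
  have himg : (line P o' d₀).image (line P o) ⊆ insert J (J.biUnion (crossLines P o o' J)) := by
    intro r hr
    obtain ⟨f, hf, rfl⟩ := mem_image.1 hr
    by_cases hfd₀ : f = d₀
    · exact hfd₀ ▸ hJd₀ ▸ mem_insert_self _ _
    · exact mem_insert_of_mem (mem_biUnion.2 ⟨d₀, hd₀, line_mem_crossLines ho hJ hd₀ hf hfd₀⟩)
  have h1 := card_le_card himg
  have h2 := card_insert_le J (J.biUnion (crossLines P o o' J))
  have h3 := card_le_card (subset_biUnion_of_mem (crossLines P o' o (line P o' d₀)) hd₀E)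
  have h4 := card_le_card hE
  have h5 := card_image_of_injOn (injOn_line ho.symm hd₀P)
  have hEeq : E = line P o' d₀ := eq_of_subset_of_card_le hE (by omega)
  refine ⟨eq_of_subset_of_card_le himg (by omega), by omega, fun f hf r hr => ?_⟩
  obtain ⟨g, hg, rfl⟩ := mem_image.1 hr
  by_cases hg₀ : line P o' g = line P o' d₀
  · exact hg₀ ▸ mem_image_of_mem _ hd₀
  · exact image_subset_image (erase_subset _ _)
      (hsub (mem_biUnion.2 ⟨f, hEeq ▸ hf, mem_erase.2 ⟨hg₀, mem_image_of_mem _ hg⟩⟩))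

lemma isSquareBlock_of_grid (hP : IsPolyomino P) (ho : o ≠ o') (hJ : IsMaxSeg P o J)
    {R : Finset (Finset Cell)}
    (hgrid : ∀ d ∈ J, (line P o' d).image (line P o) = R ∧ #(line P o' d) = #J ∧
      ∀ f ∈ line P o' d, (line P o f).image (line P o') ⊆ J.image (line P o')) :
    IsSquareBlock P := by
  obtain ⟨d₀, hd₀⟩ := hJ.1.nonempty
  have hJP := hJ.2.1
  have hcols : ∀ g ∈ P, line P o' g ∈ J.image (line P o') := by
    refine hP.forall_mem_of_adjacent (hJP hd₀) (mem_image_of_mem _ hd₀)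
      fun a ha b hb hab hcol => ?_
    obtain ⟨d, hd, hda⟩ := mem_image.1 hcol
    rcases mem_line_of_adjacent ho hab ha hb with h | h
    · exact (hgrid d hd).2.2 a (hda ▸ mem_line ha) (mem_image_of_mem _ h)
    · rwa [line_eq_of_mem ha h]
  have hmeet : ∀ g ∈ P, ∀ h ∈ P, ∃ x, x ∈ line P o g ∧ x ∈ line P o' h := by
    intro g hg h hh
    obtain ⟨d, hd, hdg⟩ := mem_image.1 (hcols g hg)
    obtain ⟨d', hd', hdh⟩ := mem_image.1 (hcols h hh)
    have : line P o g ∈ (line P o' d').image (line P o) := by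
      rw [(hgrid d' hd').1, ← (hgrid d hd).1]
      exact mem_image_of_mem _ (hdg ▸ mem_line hg)
    obtain ⟨x, hx, hxg⟩ := mem_image.1 this
    exact ⟨x, hxg ▸ mem_line (line_subset (hJP hd') hx), hdh ▸ hx⟩
  have hcard : #(line P o d₀) = #(line P o' d₀) := by
    rw [← hJ.eq_line hd₀, (hgrid d₀ hd₀).2.1]
  cases o <;> cases o' <;> simp only [ne_eq, not_true_eq_false] at ho
  · exact isSquareBlock_of_forall_meet (hJP hd₀)
      (fun g hg h hh => (hmeet h hh g hg).imp fun _ => And.symm) hcard.symm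
  · exact isSquareBlock_of_forall_meet (hJP hd₀) hmeet hcard

theorem isSquareBlock_of_not_isEmbedded (hP : IsPolyomino P) (ho : o ≠ o')
    (hJ : IsMaxSeg P o J) (hJe : ¬ IsEmbedded P J)
    (hperp : ∀ d ∈ J, ¬ IsEmbedded P (line P o' d)) : IsSquareBlock P := by
  obtain ⟨D, hDJ, hDN, hcrit⟩ := exists_hall_critical (exists_card_lt_of_not_isEmbedded ho hJ hJe)
  have hperp' (d : Cell) (hd : d ∈ J) :
      ∃ E ⊆ line P o' d, #(E.biUnion (crossLines P o' o (line P o' d))) < #E :=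
    exists_card_lt_of_not_isEmbedded ho.symm (isMaxSeg_line (hJ.2.1 hd)) (hperp d hd)
  obtain ⟨d₀, hd₀⟩ : D.Nonempty := card_pos.1 (by omega)
  obtain rfl : J = D := by
    obtain ⟨τ, hτinj, hτ⟩ := hcrit d₀ hd₀
    obtain ⟨E, hE, hEv⟩ := hperp' d₀ (hDJ hd₀)
    obtain ⟨hd₀E, hsub⟩ := mem_and_biUnion_subset_of_critical ho hJ hDJ hd₀ hτinj hτ hE hEv
    exact subset_antisymm
      (subset_of_crossLines_subset ho hJ hDJ hd₀ ((subset_biUnion_of_mem _ hd₀E).trans hsub)) hDJ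
  refine isSquareBlock_of_grid hP ho hJ (R := insert J (J.biUnion (crossLines P o o' J)))
    fun d hd => ?_
  obtain ⟨τ, hτinj, hτ⟩ := hcrit d hd
  obtain ⟨E, hE, hEv⟩ := hperp' d hd
  obtain ⟨hdE, hsub⟩ := mem_and_biUnion_subset_of_critical ho hJ subset_rfl hd hτinj hτ hE hEv
  exact grid_of_critical ho hJ hDN hd hE hEv hdE hsub

end Core

lemma IsPartition.line_mem {P J : Finset Cell} {A : Finset (Finset Cell)} {o o' : Bool}
    {d : Cell} (hA : IsPartition P A) (ho : o ≠ o') (hJ : IsMaxSeg P o J) (hJA : J ∉ A)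
    (hd : d ∈ J) : line P o' d ∈ A := by
  have hdA : d ∈ A.biUnion id := hA.2.2 ▸ hJ.2.1 hd
  obtain ⟨X, hXA, hdX⟩ := mem_biUnion.1 hdA
  rcases (hA.1 X hXA).eq_line_or_eq_line ho hdX with rfl | rfl
  · exact absurd (hJ.eq_line hd ▸ hXA) hJA
  · exact hXA

/-- If `P` is not a square and `A` is a super partition of `P`, then every
maximal cell interval not belonging to `A` is embedded. -/
theorem statement1 (P : Finset Cell) (hP : IsPolyomino P) (hns : ¬ IsSquareBlock P)
    (A : Finset (Finset Cell)) (hA : IsSuperPartition P A)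
    (J : Finset Cell) (hJ : IsMaxInterval P J) (hJA : J ∉ A) :
    IsEmbedded P J := by
  by_contra hJe
  obtain ⟨o, hJo⟩ := isMaxInterval_iff.1 hJ
  have ho : o ≠ !o := by cases o <;> decide
  exact hns (isSquareBlock_of_not_isEmbedded hP ho hJo hJe
    fun d hd => hA.2 _ (hA.1.line_mem ho hJo hJA hd))
end

section
/- Let P be a polyomino and let I, I' be distinct, disjoint maximal cell intervals of P such that I is embedded and such that there exists a maximal cell interval J of P, distinct from I and I', with J ∩ I ≠ ∅ and J ∩ I' ≠ ∅. Then there exists a set F of pairwise non-attacking cells of P with F ∩ I = ∅, such that every cell of I is attacked by some cell of F, and moreover F ∩ I' ≠ ∅. -/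
/-!
Take an embedding `F` of `I`. If it misses `I'`, pick `j ∈ J ∩ I'` and replace the cells of `F`
lying on `J` by `j`. Since `I` and `J` are maximal intervals through a common cell, they are
perpendicular, so a cell of `J` can attack a cell of `I` only along `J`, and `j` does that too.
Conversely `j` attacks only along `J` and `I'`, both of which the remaining cells of `F` avoid.
-/

section LineSegments

variable {g : ℤ → ℤ → Cell}

lemma image_Icc_union_image_Icc (hg : ∀ x y x' y', g x y = g x' y' → x = x' ∧ y = y')
    {y y' a b a' b' : ℤ}
    (hmeet : ((Finset.Icc a b).image (g · y) ∩ (Finset.Icc a' b').image (g · y')).Nonempty) :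
    (Finset.Icc a b).image (g · y) ∪ (Finset.Icc a' b').image (g · y') =
      (Finset.Icc (min a a') (max b b')).image (g · y) := by
  obtain ⟨c, hcc⟩ := hmeet
  obtain ⟨hc, hc'⟩ := Finset.mem_inter.mp hcc
  obtain ⟨x, hx, rfl⟩ := Finset.mem_image.mp hc
  obtain ⟨x', hx', hxx'⟩ := Finset.mem_image.mp hc'
  obtain ⟨rfl, rfl⟩ := hg _ _ _ _ hxx'
  simp only [Finset.mem_Icc] at hx hx'
  rw [← Finset.image_union]
  congr 1
  exact Finset.coe_injective (by push_cast; exact Set.Icc_union_Icc' (by omega) (by omega))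

lemma isLineSeg_union (hg : ∀ x y x' y', g x y = g x' y' → x = x' ∧ y = y')
    {S T : Finset Cell}
    (hS : ∃ y a b, a ≤ b ∧ S = (Finset.Icc a b).image (g · y))
    (hT : ∃ y a b, a ≤ b ∧ T = (Finset.Icc a b).image (g · y)) (hST : (S ∩ T).Nonempty) :
    ∃ y a b, a ≤ b ∧ S ∪ T = (Finset.Icc a b).image (g · y) := by
  obtain ⟨y, a, b, hab, rfl⟩ := hS
  obtain ⟨y', a', b', hab', rfl⟩ := hT
  exact ⟨y, _, _, le_trans (min_le_left _ _) (hab.trans (le_max_left _ _)),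
    image_Icc_union_image_Icc hg hST⟩

end LineSegments

lemma IsHSeg.union {S T : Finset Cell} (hS : IsHSeg S) (hT : IsHSeg T)
    (hST : (S ∩ T).Nonempty) :
    IsHSeg (S ∪ T) :=
  isLineSeg_union (g := fun x y => (x, y)) (fun _ _ _ _ h => Prod.mk.inj h) hS hT hST

lemma IsVSeg.union {S T : Finset Cell} (hS : IsVSeg S) (hT : IsVSeg T)
    (hST : (S ∩ T).Nonempty) :
    IsVSeg (S ∪ T) :=
  isLineSeg_union (g := fun y x => (x, y)) (fun _ _ _ _ h => (Prod.mk.inj h).symm) hS hT hST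

lemma eq_of_maximal_of_inter_nonempty {α : Type*} [DecidableEq α] {p : Finset α → Prop}
    (hp : ∀ S T, p S → p T → (S ∩ T).Nonempty → p (S ∪ T)) {P S T : Finset α}
    (hS : p S ∧ S ⊆ P ∧ ∀ U, p U → U ⊆ P → S ⊆ U → U = S)
    (hT : p T ∧ T ⊆ P ∧ ∀ U, p U → U ⊆ P → T ⊆ U → U = T) (hST : (S ∩ T).Nonempty) : S = T := by
  have hU := hp S T hS.1 hT.1 hST
  have hUP : S ∪ T ⊆ P := Finset.union_subset hS.2.1 hT.2.1
  rw [← hS.2.2 _ hU hUP Finset.subset_union_left, hT.2.2 _ hU hUP Finset.subset_union_right]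

section MaxIntervals

variable {P I J K : Finset Cell}

lemma IsMaxHInterval.eq_of_mem (hI : IsMaxHInterval P I) (hJ : IsMaxHInterval P J) {c : Cell}
    (hcI : c ∈ I) (hcJ : c ∈ J) : I = J :=
  eq_of_maximal_of_inter_nonempty (fun _ _ => IsHSeg.union) hI hJ
    ⟨c, Finset.mem_inter.mpr ⟨hcI, hcJ⟩⟩

lemma IsMaxVInterval.eq_of_mem (hI : IsMaxVInterval P I) (hJ : IsMaxVInterval P J) {c : Cell}
    (hcI : c ∈ I) (hcJ : c ∈ J) : I = J :=
  eq_of_maximal_of_inter_nonempty (fun _ _ => IsVSeg.union) hI hJ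
    ⟨c, Finset.mem_inter.mpr ⟨hcI, hcJ⟩⟩

lemma IsMaxInterval.subset (hI : IsMaxInterval P I) : I ⊆ P := by
  rcases hI with hI | hI
  exacts [hI.2.1, hI.2.1]

/-- Two distinct maximal intervals that meet are perpendicular, so every maximal interval is
parallel to one of them. -/
lemma IsMaxInterval.eq_or_eq_of_meets (hK : IsMaxInterval P K) (hI : IsMaxInterval P I)
    (hJ : IsMaxInterval P J) (hIJ : I ≠ J) (hmeet : (I ∩ J).Nonempty) {u v : Cell}
    (huK : u ∈ K) (huI : u ∈ I) (hvK : v ∈ K) (hvJ : v ∈ J) : K = I ∨ K = J := by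
  obtain ⟨c, hc⟩ := hmeet
  obtain ⟨hcI, hcJ⟩ := Finset.mem_inter.mp hc
  rcases hI with hI | hI <;> rcases hJ with hJ | hJ <;> rcases hK with hK | hK <;>
    first
    | exact absurd (hI.eq_of_mem hJ hcI hcJ) hIJ
    | exact Or.inl (hK.eq_of_mem hI huK huI)
    | exact Or.inr (hK.eq_of_mem hJ hvK hvJ)

lemma Attacks.symm {c d : Cell} (h : Attacks P c d) : Attacks P d c := by
  obtain ⟨hne, I, hI, hc, hd⟩ := h
  exact ⟨hne.symm, I, hI, hd, hc⟩

lemma IsRookSet.mono {F G : Finset Cell} (hF : IsRookSet P F) (hGF : G ⊆ F) : IsRookSet P G :=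
  ⟨hGF.trans hF.1, fun c hc d hd => hF.2 c (hGF hc) d (hGF hd)⟩

lemma IsRookSet.insert {F : Finset Cell} {j : Cell} (hF : IsRookSet P F) (hj : j ∈ P)
    (hFj : ∀ f ∈ F, ¬ Attacks P f j) : IsRookSet P (insert j F) := by
  refine ⟨Finset.insert_subset hj hF.1, fun c hc d hd hcd => ?_⟩
  rcases Finset.mem_insert.mp hc with rfl | hcF <;> rcases Finset.mem_insert.mp hd with rfl | hdF
  · exact hcd.1 rfl
  · exact hFj d hdF hcd.symm
  · exact hFj c hcF hcd
  · exact hF.2 c hcF d hdF hcd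

end MaxIntervals

theorem statement2_general (P : Finset Cell)
    (I I' : Finset Cell) (hI : IsMaxInterval P I) (hI' : IsMaxInterval P I')
    (hdisj : Disjoint I I') (hemb : IsEmbedded P I)
    (J : Finset Cell) (hJ : IsMaxInterval P J) (hJI : J ≠ I) (hJI' : J ≠ I')
    (h1 : (J ∩ I).Nonempty) (h2 : (J ∩ I').Nonempty) :
    ∃ F : Finset Cell, IsRookSet P F ∧ F ∩ I = ∅ ∧
      (∀ c ∈ I, ∃ f ∈ F, Attacks P f c) ∧ (F ∩ I').Nonempty := by
  obtain ⟨F, hF, hFI, hFatt⟩ := hemb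
  by_cases hFI' : (F ∩ I').Nonempty
  · exact ⟨F, hF, hFI, hFatt, hFI'⟩
  have hFI : Disjoint F I := Finset.disjoint_iff_inter_eq_empty.mpr hFI
  obtain ⟨j, hj⟩ := h2
  obtain ⟨hjJ, hjI'⟩ := Finset.mem_inter.mp hj
  have hjI : j ∉ I := Finset.disjoint_right.mp hdisj hjI'
  refine ⟨insert j (F \ J), ?_, ?_, ?_,
    ⟨j, Finset.mem_inter.mpr ⟨Finset.mem_insert_self _ _, hjI'⟩⟩⟩
  · refine (hF.mono Finset.sdiff_subset).insert (hI'.subset hjI')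
      fun f hf ⟨_, K, hK, hfK, hjK⟩ => ?_
    obtain ⟨hfF, hfJ⟩ := Finset.mem_sdiff.mp hf
    rcases hK.eq_or_eq_of_meets hJ hI' hJI' ⟨j, hj⟩ hjK hjJ hjK hjI' with rfl | rfl
    · exact hfJ hfK
    · exact hFI' ⟨f, Finset.mem_inter.mpr ⟨hfF, hfK⟩⟩
  · rw [Finset.insert_inter_of_notMem hjI, ← Finset.disjoint_iff_inter_eq_empty]
    exact hFI.mono_left Finset.sdiff_subset
  · intro c hc
    obtain ⟨f, hf, hfc⟩ := hFatt c hc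
    by_cases hfJ : f ∈ J
    · obtain ⟨_, K, hK, hfK, hcK⟩ := hfc
      rcases hK.eq_or_eq_of_meets hI hJ hJI.symm (Finset.inter_comm J I ▸ h1) hcK hc hfK hfJ
        with rfl | rfl
      · exact absurd hfK (Finset.disjoint_left.mp hFI hf)
      · exact ⟨j, Finset.mem_insert_self _ _,
          ⟨(ne_of_mem_of_not_mem hc hjI).symm, K, hK, hjJ, hcK⟩⟩
    · exact ⟨f, Finset.mem_insert_of_mem (Finset.mem_sdiff.mpr ⟨hf, hfJ⟩), hfc⟩

/-- If `I` is embedded and some maximal interval `J` meets both `I` and `I'`,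
then `I` has an embedding meeting `I'`. -/
theorem statement2 (P : Finset Cell) (hP : IsPolyomino P)
    (I I' : Finset Cell) (hI : IsMaxInterval P I) (hI' : IsMaxInterval P I')
    (hne : I ≠ I') (hdisj : Disjoint I I') (hemb : IsEmbedded P I)
    (J : Finset Cell) (hJ : IsMaxInterval P J) (hJI : J ≠ I) (hJI' : J ≠ I')
    (h1 : (J ∩ I).Nonempty) (h2 : (J ∩ I').Nonempty) :
    ∃ F : Finset Cell, IsRookSet P F ∧ F ∩ I = ∅ ∧
      (∀ c ∈ I, ∃ f ∈ F, Attacks P f c) ∧ (F ∩ I').Nonempty :=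
  statement2_general P I I' hI hI' hdisj hemb J hJ hJI hJI' h1 h2
end

section
/- Let P be a polyomino containing all six cells of some 2×3 or 3×2 rectangle of cells. Then these six cells induce a 6-cycle in the complement graph Ḡ_P; in particular, Ḡ_P is not chordal. -/
/-!
Two distinct cells of a rectangle inside `P` that share a row or a column lie on a segment of
`P`, which extends to a maximal interval, so they attack; cells differing in both coordinates
never attack. Hence in `Ḡ_P` two cells of the rectangle are adjacent exactly when they differ in
both coordinates. Listing the cells of a `2 × 3` rectangle as `(i mod 2, i mod 3)` for
`i ∈ ℤ/6ℤ`, this happens, by the Chinese remainder theorem, exactly when `i - j = ±1`.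
-/

open Finset

lemma exists_maximal_superset {α : Type*} (p : Finset α → Prop) {P I : Finset α}
    (hI : p I) (hIP : I ⊆ P) :
    ∃ J, (p J ∧ J ⊆ P ∧ ∀ J', p J' → J' ⊆ P → J ⊆ J' → J' = J) ∧ I ⊆ J := by
  have hfin : {J | p J ∧ J ⊆ P}.Finite :=
    P.powerset.finite_toSet.subset fun J hJ => mem_powerset.2 hJ.2
  obtain ⟨J, hIJ, hJ⟩ := hfin.exists_le_maximal (a := I) ⟨hI, hIP⟩
  exact ⟨J, ⟨hJ.prop.1, hJ.prop.2,
    fun J' hp hJ'P hJJ' => (hJ.eq_of_le ⟨hp, hJ'P⟩ hJJ').symm⟩, hIJ⟩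

lemma attacks_of_mem_seg {P I : Finset Cell} (hI : IsHSeg I ∨ IsVSeg I) (hIP : I ⊆ P)
    {c d : Cell} (hne : c ≠ d) (hc : c ∈ I) (hd : d ∈ I) : Attacks P c d := by
  refine ⟨hne, ?_⟩
  rcases hI with hI | hI
  · obtain ⟨J, hJ, hIJ⟩ := exists_maximal_superset IsHSeg hI hIP
    exact ⟨J, Or.inl hJ, hIJ hc, hIJ hd⟩
  · obtain ⟨J, hJ, hIJ⟩ := exists_maximal_superset IsVSeg hI hIP
    exact ⟨J, Or.inr hJ, hIJ hc, hIJ hd⟩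

lemma not_attacks_of_ne_of_ne (P : Finset Cell) {c d : Cell} (h1 : c.1 ≠ d.1)
    (h2 : c.2 ≠ d.2) : ¬ Attacks P c d := by
  rintro ⟨-, I, hI, hc, hd⟩
  rcases hI with ⟨⟨y, a, b, -, rfl⟩, -⟩ | ⟨⟨x, a, b, -, rfl⟩, -⟩
  · simp only [mem_image] at hc hd
    obtain ⟨_, -, rfl⟩ := hc
    obtain ⟨_, -, rfl⟩ := hd
    exact h2 rfl
  · simp only [mem_image] at hc hd
    obtain ⟨_, -, rfl⟩ := hc
    obtain ⟨_, -, rfl⟩ := hd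
    exact h1 rfl

lemma gBar_adj_iff_of_mem_rect {P : Finset Cell} {x₀ x₁ y₀ y₁ : ℤ}
    (hR : Icc x₀ x₁ ×ˢ Icc y₀ y₁ ⊆ P) {c d : {c : Cell // c ∈ P}}
    (hc : (c : Cell) ∈ Icc x₀ x₁ ×ˢ Icc y₀ y₁)
    (hd : (d : Cell) ∈ Icc x₀ x₁ ×ˢ Icc y₀ y₁) :
    (GBar P).Adj c d ↔ (c : Cell).1 ≠ (d : Cell).1 ∧ (c : Cell).2 ≠ (d : Cell).2 := by
  obtain ⟨⟨c₁, c₂⟩, hcP⟩ := c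
  obtain ⟨⟨d₁, d₂⟩, hdP⟩ := d
  simp only [mem_product, mem_Icc] at hc hd
  simp only [GBar, GP, SimpleGraph.compl_adj, ne_eq, Subtype.mk.injEq, Prod.mk.injEq]
  constructor
  · rintro ⟨hne, hna⟩
    refine ⟨fun h₁ => hna ?_, fun h₂ => hna ?_⟩
    · subst h₁
      refine attacks_of_mem_seg (I := (Icc y₀ y₁).image fun y => (c₁, y))
        (Or.inr ⟨c₁, y₀, y₁, by omega, rfl⟩) ?_ (by simpa using hne) ?_ ?_
      · rintro _ hp
        obtain ⟨y, hy, rfl⟩ := mem_image.1 hp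
        exact hR (mem_product.2 ⟨mem_Icc.2 hc.1, hy⟩)
      · exact mem_image_of_mem _ (mem_Icc.2 hc.2)
      · exact mem_image_of_mem _ (mem_Icc.2 hd.2)
    · subst h₂
      refine attacks_of_mem_seg (I := (Icc x₀ x₁).image fun x => (x, c₂))
        (Or.inl ⟨c₂, x₀, x₁, by omega, rfl⟩) ?_ (by simpa using hne) ?_ ?_
      · rintro _ hp
        obtain ⟨x, hx, rfl⟩ := mem_image.1 hp
        exact hR (mem_product.2 ⟨hx, mem_Icc.2 hc.2⟩)
      · exact mem_image_of_mem (fun x => (x, c₂)) (mem_Icc.2 hc.1)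
      · exact mem_image_of_mem (fun x => (x, c₂)) (mem_Icc.2 hd.1)
  · rintro ⟨h₁, h₂⟩
    exact ⟨fun h => h₁ h.1, not_attacks_of_ne_of_ne P h₁ h₂⟩

def crtCell (i : ZMod 6) : Cell := ((i.val % 2 : ℕ), (i.val % 3 : ℕ))

lemma crtCell_injective : Function.Injective crtCell := by decide

lemma crtCell_mem (i : ZMod 6) : crtCell i ∈ Icc 0 1 ×ˢ Icc 0 2 := by
  revert i; decide

lemma crtCell_ne_and_ne_iff (i j : ZMod 6) :
    (crtCell i).1 ≠ (crtCell j).1 ∧ (crtCell i).2 ≠ (crtCell j).2 ↔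
      i = j + 1 ∨ j = i + 1 := by
  revert i j; decide

lemma exists_induced_sixCycle_of_rect {P : Finset Cell} {x₀ x₁ y₀ y₁ : ℤ}
    (hR : Icc x₀ x₁ ×ˢ Icc y₀ y₁ ⊆ P) (g : ZMod 6 → Cell)
    (hg : Function.Injective g) (hgR : ∀ i, g i ∈ Icc x₀ x₁ ×ˢ Icc y₀ y₁)
    (hgadj : ∀ i j, (g i).1 ≠ (g j).1 ∧ (g i).2 ≠ (g j).2 ↔ i = j + 1 ∨ j = i + 1) :
    ∃ f : ZMod 6 → {c : Cell // c ∈ P}, Function.Injective f ∧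
      (∀ i, (f i : Cell) ∈ Icc x₀ x₁ ×ˢ Icc y₀ y₁) ∧
      ∀ i j : ZMod 6, (GBar P).Adj (f i) (f j) ↔ (i = j + 1 ∨ j = i + 1) :=
  ⟨fun i => ⟨g i, hR (hgR i)⟩, fun _ _ h => hg (congrArg Subtype.val h), hgR,
    fun i j => (gBar_adj_iff_of_mem_rect hR (hgR i) (hgR j)).trans (hgadj i j)⟩

theorem statement6_general (P : Finset Cell) (a : Cell)
    (S : Finset Cell)
    (hS : S = Finset.Icc a.1 (a.1 + 1) ×ˢ Finset.Icc a.2 (a.2 + 2) ∨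
          S = Finset.Icc a.1 (a.1 + 2) ×ˢ Finset.Icc a.2 (a.2 + 1))
    (hSP : S ⊆ P) :
    (∃ f : ZMod 6 → {c : Cell // c ∈ P}, Function.Injective f ∧
      (∀ i, (f i : Cell) ∈ S) ∧
      ∀ i j : ZMod 6, (GBar P).Adj (f i) (f j) ↔ (i = j + 1 ∨ j = i + 1)) ∧
    ¬ IsChordal (GBar P) := by
  have hcycle : ∃ f : ZMod 6 → {c : Cell // c ∈ P}, Function.Injective f ∧
      (∀ i, (f i : Cell) ∈ S) ∧
      ∀ i j : ZMod 6, (GBar P).Adj (f i) (f j) ↔ (i = j + 1 ∨ j = i + 1) := by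
    rcases hS with rfl | rfl
    · refine exists_induced_sixCycle_of_rect hSP (fun i => a + crtCell i)
        ((add_right_injective a).comp crtCell_injective) (fun i => ?_)
        (by simpa using crtCell_ne_and_ne_iff)
      have := crtCell_mem i
      simp only [mem_product, mem_Icc, Prod.fst_add, Prod.snd_add] at this ⊢
      omega
    · refine exists_induced_sixCycle_of_rect hSP (fun i => a + (crtCell i).swap)
        ((add_right_injective a).comp (Prod.swap_injective.comp crtCell_injective)) (fun i => ?_)
        (by simpa [and_comm] using crtCell_ne_and_ne_iff)
      have := crtCell_mem i
      simp only [mem_product, mem_Icc, Prod.fst_add, Prod.snd_add,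
        Prod.fst_swap, Prod.snd_swap] at this ⊢
      omega
  obtain ⟨f, hf, hfS, hfadj⟩ := hcycle
  exact ⟨⟨f, hf, hfS, hfadj⟩,
    fun hchordal => hchordal 6 (by norm_num) ⟨by norm_num, f, hf, hfadj⟩⟩

/-- If `P` contains a `2×3` or `3×2` rectangle of cells, then those six cells
induce a 6-cycle in `Ḡ_P`; in particular `Ḡ_P` is not chordal. -/
theorem statement6 (P : Finset Cell) (hP : IsPolyomino P) (a : Cell)
    (S : Finset Cell)
    (hS : S = Finset.Icc a.1 (a.1 + 1) ×ˢ Finset.Icc a.2 (a.2 + 2) ∨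
          S = Finset.Icc a.1 (a.1 + 2) ×ˢ Finset.Icc a.2 (a.2 + 1))
    (hSP : S ⊆ P) :
    (∃ f : ZMod 6 → {c : Cell // c ∈ P}, Function.Injective f ∧
      (∀ i, (f i : Cell) ∈ S) ∧
      ∀ i j : ZMod 6, (GBar P).Adj (f i) (f j) ↔ (i = j + 1 ∨ j = i + 1)) ∧
    ¬ IsChordal (GBar P) :=
  statement6_general P a S hS hSP
end
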